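/- Suppose the prior density π on (0,∞) satisfies A1 and A2 with constants ε∈(0,1), δ>0, β>0, and fix an integer t ≥ 1. Then there exists G > 0 such that for every n ≥ 4 and every integer s with 0 < s ≤ n − t, C(n,t,t+s) ≤ G · Γ(t+β+1) · 2^s · s · ε^{−1} · E(α^{t+s−1}) · (log(n/(1+ε)))^{−1}, where C(n,t,t+s) = (∫_0^∞ α^{t+s}/α^{(n)} π(α) dα)/(∫_0^∞ α^{t}/α^{(n)} π(α) dα), E(α^r) = ∫_0^∞ α^r π(α) dα (possibly infinite), and Γ is the Gamma function. -/

import Mathlib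

open MeasureTheory Filter Topology
open scoped Classical BigOperators ENNReal

noncomputable section

/-- Ascending factorial `α^{(n)} = α (α+1) ⋯ (α+n−1)`. -/
def ascFactorial (α : ℝ) (n : ℕ) : ℝ := ∏ i ∈ Finset.range n, (α + (i : ℝ))

/-- (A1): `π` is a probability density on `(0,∞)`. -/
def IsPriorDensity (π : ℝ → ℝ) : Prop :=
  Measurable π ∧ (∀ α, 0 ≤ π α) ∧ (∫ α in Set.Ioi (0:ℝ), π α) = 1

/-- (A2): polynomial behaviour of `π` near the origin, with constants `ε ∈ (0,1)`,
`δ > 0`, `β > 0`. -/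
def PolyAtZero (π : ℝ → ℝ) (ε δ β : ℝ) : Prop :=
  ε ∈ Set.Ioo (0:ℝ) 1 ∧ 0 < δ ∧ 0 < β ∧
    ∀ α ∈ Set.Ioo (0:ℝ) ε, δ⁻¹ * α ^ β ≤ π α ∧ π α ≤ δ * α ^ β

/-- The lower incomplete Gamma function `γ(x,y) = ∫_0^y z^{x−1} e^{−z} dz`. -/
def lowerGamma (x y : ℝ) : ℝ := ∫ z in (0:ℝ)..y, z ^ (x - 1) * Real.exp (-z)

/-- `C(n,t,s) = (∫_0^∞ α^s/α^{(n)} π dα)/(∫_0^∞ α^t/α^{(n)} π dα)`. -/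
def Cratio (π : ℝ → ℝ) (n t s : ℕ) : ℝ :=
  (∫ α in Set.Ioi (0:ℝ), α ^ s / ascFactorial α n * π α) /
  (∫ α in Set.Ioi (0:ℝ), α ^ t / ascFactorial α n * π α)

/-!
Write `n = m + 1` and `α^{(n)} = α P(α)` with `P(α) = ∏_{i<m} (α+i+1)`. Comparing each factor
`i+1+α` with `(i+1) e^{α/(i+1)}`, and using `log n ≤ H_m ≤ 1 + log n`, gives
`m! e^{min(α,ε) log(n)/(1+ε)} ≤ P(α) ≤ m! e^{α(1 + log n)}`.

The upper bound keeps the denominator of `C` above `(ε/(1+log n))^{t+β}/m!` up to constants,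
coming from `α < ε/(1+log n)`. In the numerator, `α ≥ ε` contributes at most
`n^{-ε/(1+ε)} E(α^{t+s-1})/m!`, and `α < ε` at most `ε^{s-1} Γ(t+β+1) ((1+ε)/log n)^{t+β+1}/m!`
(a Gamma integral). After division the first term is `O(n^{-ε/(1+ε)} (log n)^{t+β}) = O(1/log n)`,
and the second is `O(s/log n)` times the lower bound `ε^{t+s+β}/(t+s+β)` of `E(α^{t+s-1})`.
-/

open Finset
open scoped Nat

section

open Real

theorem exp_div_one_add_le_one_add {x ε : ℝ} (hx : 0 ≤ x) (hxε : x ≤ ε) :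
    exp (x / (1 + ε)) ≤ 1 + x := by
  rw [← le_log_iff_exp_le (by linarith)]
  calc x / (1 + ε) ≤ x / (1 + x) := by gcongr
    _ = 1 - (1 + x)⁻¹ := by field_simp; ring
    _ ≤ log (1 + x) := one_sub_inv_le_log_of_pos (by linarith)

theorem rpow_mul_exp_neg_mul_le {x r c : ℝ} (hx : 0 < x) (hr : 0 < r) (hc : 0 < c) :
    x ^ r * exp (-(c * x)) ≤ (r / c) ^ r := by
  have hlog : log (x / (r / c)) ≤ x / (r / c) - 1 := log_le_sub_one_of_pos (by positivity)
  rw [log_div hx.ne' (by positivity)] at hlog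
  rw [rpow_def_of_pos hx, rpow_def_of_pos (by positivity), ← exp_add, exp_le_exp]
  have := mul_le_mul_of_nonneg_left hlog hr.le
  field_simp at this ⊢
  nlinarith

theorem factorial_mul_exp_mul_harmonic (m : ℕ) (x : ℝ) :
    (m ! : ℝ) * exp (x * harmonic m) = ∏ i ∈ range m, (((i : ℝ) + 1) * exp (x / (i + 1))) := by
  rw [prod_mul_distrib, ← prod_range_add_one_eq_factorial, harmonic, ← exp_sum]
  push_cast
  simp [mul_sum, div_eq_mul_inv]

theorem prod_add_succ_le (m : ℕ) {α : ℝ} (hα : 0 ≤ α) :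
    ∏ i ∈ range m, (α + ((i : ℝ) + 1)) ≤ m ! * exp (α * harmonic m) := by
  rw [factorial_mul_exp_mul_harmonic]
  refine prod_le_prod (fun i _ => by positivity) fun i _ => ?_
  have := add_one_le_exp (α / (i + 1))
  calc α + ((i : ℝ) + 1) = (i + 1) * (α / (i + 1) + 1) := by field_simp
    _ ≤ _ := by gcongr

theorem le_prod_add_succ (m : ℕ) {α ε : ℝ} (hα : 0 ≤ α) (hαε : α ≤ ε) :
    m ! * exp (α / (1 + ε) * harmonic m) ≤ ∏ i ∈ range m, (α + ((i : ℝ) + 1)) := by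
  rw [factorial_mul_exp_mul_harmonic]
  refine prod_le_prod (fun i _ => by positivity) fun i _ => ?_
  have hi : (0 : ℝ) < i + 1 := by positivity
  have hαi : α / (i + 1) ≤ ε := by
    rw [div_le_iff₀ hi]; nlinarith [(i.cast_nonneg : (0 : ℝ) ≤ i)]
  have := exp_div_one_add_le_one_add (by positivity) hαi
  calc ((i : ℝ) + 1) * exp (α / (1 + ε) / (i + 1))
      = (i + 1) * exp (α / (i + 1) / (1 + ε)) := by ring_nf
    _ ≤ (i + 1) * (1 + α / (i + 1)) := by gcongr
    _ = α + (i + 1) := by field_simp; ring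

theorem ascFactorial_succ (α : ℝ) (m : ℕ) :
    ascFactorial α (m + 1) = α * ∏ i ∈ range m, (α + ((i : ℝ) + 1)) := by
  rw [ascFactorial, prod_range_succ', mul_comm]
  push_cast
  simp

theorem ascFactorial_pos {α : ℝ} (hα : 0 < α) (n : ℕ) : 0 < ascFactorial α n :=
  prod_pos fun i _ => by positivity

theorem pow_le_ascFactorial {α : ℝ} (hα : 0 < α) {k n : ℕ} (hk : 1 ≤ k) (hkn : k ≤ n) :
    α ^ k ≤ ascFactorial α n := by
  obtain ⟨j, rfl⟩ := Nat.exists_eq_add_of_le hkn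
  have hpow : α ^ k = ∏ _i ∈ range k, α := by simp
  rw [ascFactorial, prod_range_add, ← mul_one (α ^ k), hpow]
  gcongr with i _
  · exact le_add_of_nonneg_right i.cast_nonneg
  · exact one_le_prod fun i _ => by
      have : (1 : ℝ) ≤ k := by exact_mod_cast hk
      push_cast; linarith [(i.cast_nonneg : (0 : ℝ) ≤ i)]

theorem ascFactorial_le (m : ℕ) {α : ℝ} (hα : 0 ≤ α) :
    ascFactorial α (m + 1) ≤ α * m ! * exp (α * (1 + log (m + 1))) := by
  have hH : (harmonic m : ℝ) ≤ 1 + log (m + 1) := by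
    refine (harmonic_le_one_add_log m).trans ?_
    rcases m.eq_zero_or_pos with rfl | hm
    · simp
    · gcongr; linarith
  rw [ascFactorial_succ, mul_assoc]
  gcongr
  exact (prod_add_succ_le m hα).trans (by gcongr)

theorem le_ascFactorial (m : ℕ) {α ε : ℝ} (hα : 0 < α) (hε : 0 ≤ ε) :
    α * m ! * exp (min α ε / (1 + ε) * log (m + 1)) ≤ ascFactorial α (m + 1) := by
  have hH : log (m + 1) ≤ harmonic m := by exact_mod_cast log_add_one_le_harmonic m
  rw [ascFactorial_succ, mul_assoc]
  gcongr
  calc (m ! : ℝ) * exp (min α ε / (1 + ε) * log (m + 1))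
      ≤ m ! * exp (min α ε / (1 + ε) * harmonic m) := by gcongr
    _ ≤ ∏ i ∈ range m, (min α ε + ((i : ℝ) + 1)) :=
        le_prod_add_succ m (by positivity) (min_le_right α ε)
    _ ≤ ∏ i ∈ range m, (α + ((i : ℝ) + 1)) := by
        gcongr
        exact min_le_left α ε

theorem pow_succ_div_ascFactorial_le (m k : ℕ) {α ε : ℝ} (hα : 0 < α) (hε : 0 ≤ ε) :
    α ^ (k + 1) / ascFactorial α (m + 1) ≤
      α ^ k * exp (-(min α ε / (1 + ε) * log (m + 1))) / m ! := by
  rw [div_le_div_iff₀ (ascFactorial_pos hα _) (by positivity), exp_neg]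
  calc α ^ (k + 1) * m ! = α ^ k * (exp (min α ε / (1 + ε) * log (m + 1)))⁻¹ *
        (α * m ! * exp (min α ε / (1 + ε) * log (m + 1))) := by field_simp; ring
    _ ≤ _ := by gcongr; exact le_ascFactorial m hα hε

theorem integral_Ioo_rpow {r c : ℝ} (hr : -1 < r) (hc : 0 ≤ c) :
    ∫ x in Set.Ioo 0 c, x ^ r = c ^ (r + 1) / (r + 1) := by
  rw [← integral_Ioc_eq_integral_Ioo, ← intervalIntegral.integral_of_le hc,
    integral_rpow (Or.inl hr), zero_rpow (by linarith), sub_zero]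

theorem lintegral_rpow_mul_exp_neg_mul {a r : ℝ} (ha : 0 < a) (hr : 0 < r) :
    ∫⁻ x in Set.Ioi 0, ENNReal.ofReal (x ^ (a - 1) * exp (-(r * x))) =
      ENNReal.ofReal ((1 / r) ^ a * Gamma a) := by
  have hint := integral_rpow_mul_exp_neg_mul_Ioi ha hr
  rw [← hint, ofReal_integral_eq_lintegral_ofReal]
  · exact Integrable.of_integral_ne_zero (by rw [hint]; positivity)
  · filter_upwards [ae_restrict_mem measurableSet_Ioi] with x hx
    exact mul_nonneg (rpow_nonneg (le_of_lt hx) _) (exp_pos _).le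

theorem one_le_log_of_four_le {x : ℝ} (hx : 4 ≤ x) : 1 ≤ log x := by
  rw [le_log_iff_exp_le (by positivity)]
  linarith [exp_one_lt_d9]

theorem log_div_one_add_mem_Ioc {x ε : ℝ} (hx : 2 ≤ x) (hε : 0 < ε) (hε1 : ε < 1) :
    log (x / (1 + ε)) ∈ Set.Ioc 0 (log x) :=
  ⟨log_pos ((one_lt_div (by positivity)).mpr (by linarith)),
    log_le_log (by positivity) (div_le_self (by positivity) (by linarith))⟩

section

variable {ε δ p L L₀ : ℝ}

theorem tail_ratio_le (hε : 0 < ε) (hδ : 0 < δ) (hp : 0 < p) (hL : 1 ≤ L) (hL₀ : 0 < L₀)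
    (hL₀L : L₀ ≤ L) :
    exp (-(ε / (1 + ε) * L)) / (δ⁻¹ * exp (-1) * ((ε / (1 + L)) ^ p / p)) ≤
      δ * exp 1 * p / ε ^ p * (2 * (p + 1) / (ε / (1 + ε))) ^ (p + 1) / L₀ := by
  have key :
      exp (-(ε / (1 + ε) * L)) * (1 + L) ^ p * L₀ ≤ (2 * (p + 1) / (ε / (1 + ε))) ^ (p + 1) :=
    calc exp (-(ε / (1 + ε) * L)) * (1 + L) ^ p * L₀
        = (1 + L) ^ p * L₀ * exp (-(ε / (1 + ε) / 2 * (2 * L))) := by ring_nf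
      _ ≤ (2 * L) ^ p * (2 * L) * exp (-(ε / (1 + ε) / 2 * (2 * L))) := by
          gcongr <;> linarith
      _ = (2 * L) ^ (p + 1) * exp (-(ε / (1 + ε) / 2 * (2 * L))) := by
          rw [rpow_add_one (by positivity)]
      _ ≤ ((p + 1) / (ε / (1 + ε) / 2)) ^ (p + 1) :=
          rpow_mul_exp_neg_mul_le (by positivity) (by positivity) (by positivity)
      _ = (2 * (p + 1) / (ε / (1 + ε))) ^ (p + 1) := by congr 1; field_simp
  rw [le_div_iff₀ hL₀, div_rpow hε.le (by positivity), exp_neg 1]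
  calc exp (-(ε / (1 + ε) * L)) / (δ⁻¹ * (exp 1)⁻¹ * (ε ^ p / (1 + L) ^ p / p)) * L₀
      = δ * exp 1 * p / ε ^ p * (exp (-(ε / (1 + ε) * L)) * (1 + L) ^ p * L₀) := by
        field_simp
    _ ≤ _ := by gcongr

theorem near_zero_ratio_le (hε : 0 < ε) (hδ : 0 < δ) (hp : 0 < p) (hL : 1 ≤ L) (hL₀ : 0 < L₀)
    (hL₀L : L₀ ≤ L) (r : ℕ) :
    δ * ε ^ r * ((1 / (L / (1 + ε))) ^ (p + 1) * Gamma (p + 1)) /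
        (δ⁻¹ * (ε ^ (p + r + 1) / (p + r + 1)) * (δ⁻¹ * exp (-1) * ((ε / (1 + L)) ^ p / p))) ≤
      δ ^ 3 * exp 1 * p * (p + 1) * Gamma (p + 1) * (1 + ε) ^ (p + 1) * 2 ^ p /
        (ε ^ p * ε ^ p * ε) * (r + 1) / L₀ := by
  have hM : (1 + L) ^ p ≤ 2 ^ p * L ^ p := by
    rw [← mul_rpow zero_le_two (by positivity)]; gcongr; linarith
  have hr : p + r + 1 ≤ (p + 1) * (r + 1) := by nlinarith [r.cast_nonneg (α := ℝ)]
  have hεr : ε ^ (p + r + 1) = ε ^ p * ε ^ r * ε := by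
    rw [rpow_add hε, rpow_add hε, rpow_natCast, rpow_one]
  rw [one_div_div, div_rpow (by positivity) (by positivity), div_rpow hε.le (by positivity),
    rpow_add_one (show L ≠ 0 by positivity) p, hεr, exp_neg 1, le_div_iff₀ hL₀]
  calc δ * ε ^ r * ((1 + ε) ^ (p + 1) / (L ^ p * L) * Gamma (p + 1)) /
        (δ⁻¹ * (ε ^ p * ε ^ r * ε / (p + r + 1)) *
          (δ⁻¹ * (exp 1)⁻¹ * (ε ^ p / (1 + L) ^ p / p))) * L₀
      = δ ^ 3 * exp 1 * p * Gamma (p + 1) * (1 + ε) ^ (p + 1) / (ε ^ p * ε ^ p * ε) *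
          ((p + r + 1) * (1 + L) ^ p * (L₀ / L) / L ^ p) := by
        field_simp
    _ ≤ δ ^ 3 * exp 1 * p * Gamma (p + 1) * (1 + ε) ^ (p + 1) / (ε ^ p * ε ^ p * ε) *
          ((p + 1) * (r + 1) * (2 ^ p * L ^ p) * 1 / L ^ p) := by
        gcongr
        exact div_le_one_of_le₀ hL₀L (by positivity)
    _ = _ := by field_simp

end

theorem ofReal_div_le_ofReal_mul {N I a b d e₀ c F : ℝ} {E : ℝ≥0∞} (hF : 0 < F) (hd : 0 < d)
    (he₀ : 0 < e₀) (ha : 0 ≤ a) (hb : 0 ≤ b)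
    (hN : ENNReal.ofReal N ≤ ENNReal.ofReal (a / F) * E + ENNReal.ofReal (b / F))
    (hI : d / F ≤ I) (hE : ENNReal.ofReal e₀ ≤ E) (hc : a / d + b / (e₀ * d) ≤ c) :
    ENNReal.ofReal (N / I) ≤ ENNReal.ofReal c * E := by
  have hbE : ENNReal.ofReal (b / F) ≤ ENNReal.ofReal (b / F / e₀) * E := by
    calc ENNReal.ofReal (b / F) = ENNReal.ofReal (b / F / e₀) * ENNReal.ofReal e₀ := by
          rw [← ENNReal.ofReal_mul (by positivity), div_mul_cancel₀ _ he₀.ne']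
      _ ≤ _ := by gcongr
  have hN' : ENNReal.ofReal N ≤ ENNReal.ofReal (a / F + b / F / e₀) * E := by
    rw [ENNReal.ofReal_add (by positivity) (by positivity), add_mul]
    exact hN.trans (add_le_add_right hbE _)
  have hcancel : (a / F + b / F / e₀) / (d / F) = a / d + b / (e₀ * d) := by
    field_simp
  calc ENNReal.ofReal (N / I) = ENNReal.ofReal N / ENNReal.ofReal I :=
        ENNReal.ofReal_div_of_pos ((by positivity : 0 < d / F).trans_le hI)
    _ ≤ ENNReal.ofReal (a / F + b / F / e₀) * E / ENNReal.ofReal (d / F) := by gcongr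
    _ = ENNReal.ofReal (a / d + b / (e₀ * d)) * E := by
        rw [← hcancel, ENNReal.ofReal_div_of_pos (y := d / F) (by positivity),
          ENNReal.mul_div_right_comm]
    _ ≤ ENNReal.ofReal c * E := by gcongr

end

-- Opening all of `Real` would make `π` denote `Real.pi`.
open Real (exp log Gamma)

section Prior

variable {π : ℝ → ℝ} {ε δ β : ℝ}

theorem IsPriorDensity.integrableOn (hπ : IsPriorDensity π) : IntegrableOn π (Set.Ioi 0) :=
  Integrable.of_integral_ne_zero (by rw [hπ.2.2]; norm_num)

theorem IsPriorDensity.pow_div_ascFactorial_mul_nonneg (hπ : IsPriorDensity π) (k n : ℕ)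
    {α : ℝ} (hα : 0 < α) : 0 ≤ α ^ k / ascFactorial α n * π α :=
  mul_nonneg (div_nonneg (by positivity) (ascFactorial_pos hα n).le) (hπ.2.1 α)

theorem IsPriorDensity.integrableOn_pow_div_ascFactorial_mul (hπ : IsPriorDensity π) {k n : ℕ}
    (hk : 1 ≤ k) (hkn : k ≤ n) :
    IntegrableOn (fun α => α ^ k / ascFactorial α n * π α) (Set.Ioi 0) := by
  have hmeas : Measurable fun α : ℝ => ascFactorial α n :=
    Finset.measurable_prod _ fun i _ => measurable_id.add_const _
  refine Integrable.mono hπ.integrableOn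
    (((measurable_id.pow_const k).div hmeas).mul hπ.1).aestronglyMeasurable ?_
  filter_upwards [ae_restrict_mem measurableSet_Ioi] with α hα
  rw [Real.norm_of_nonneg (hπ.pow_div_ascFactorial_mul_nonneg k n hα),
    Real.norm_of_nonneg (hπ.2.1 α)]
  refine mul_le_of_le_one_left (hπ.2.1 α) ?_
  exact (div_le_one (ascFactorial_pos hα n)).mpr (pow_le_ascFactorial hα hk hkn)

theorem le_integral_pow_div_ascFactorial_mul (hπ : IsPriorDensity π) (hA2 : PolyAtZero π ε δ β)
    {m t : ℕ} (ht : 1 ≤ t) (htm : t ≤ m + 1) :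
    δ⁻¹ * exp (-1) * ((ε / (1 + log (m + 1))) ^ ((t : ℝ) + β) / (t + β)) / m ! ≤
      ∫ α in Set.Ioi 0, α ^ t / ascFactorial α (m + 1) * π α := by
  obtain ⟨⟨hε0, hε1⟩, hδ, hβ, hπε⟩ := hA2
  set M := 1 + log ((m : ℝ) + 1)
  have hM : 1 ≤ M :=
    le_add_of_nonneg_right (Real.log_nonneg (by linarith [m.cast_nonneg (α := ℝ)]))
  set c := ε / M
  set K := δ⁻¹ * exp (-1) / (m ! : ℝ) with hK
  obtain ⟨u, rfl⟩ : ∃ u, t = u + 1 := ⟨t - 1, by omega⟩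
  have hp : (0 : ℝ) < (u + 1 : ℕ) + β := by positivity
  have hpoint : ∀ α ∈ Set.Ioo 0 c,
      K * α ^ ((u + 1 : ℕ) + β - 1) ≤ α ^ (u + 1) / ascFactorial α (m + 1) * π α := by
    rintro α ⟨hα0, hαc⟩
    have hαM : α * M ≤ 1 := by
      rw [lt_div_iff₀ (by positivity)] at hαc; linarith
    have hαε : α < ε := hαc.trans_le (div_le_self hε0.le hM)
    have hasc : ascFactorial α (m + 1) ≤ α * m ! * exp 1 :=
      (ascFactorial_le m hα0.le).trans (by gcongr)
    have hrpow : α ^ ((u + 1 : ℕ) + β - 1) = α ^ u * α ^ β := by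
      rw [← Real.rpow_natCast, ← Real.rpow_add hα0]; push_cast; ring_nf
    calc K * α ^ ((u + 1 : ℕ) + β - 1)
        = α ^ (u + 1) / (α * m ! * exp 1) * (δ⁻¹ * α ^ β) := by
          rw [hrpow, hK, Real.exp_neg]; field_simp; ring
      _ ≤ α ^ (u + 1) / ascFactorial α (m + 1) * π α := by
          have hpos := ascFactorial_pos hα0 (m + 1)
          gcongr
          exact (hπε α ⟨hα0, hαε⟩).1
  have hint := hπ.integrableOn_pow_div_ascFactorial_mul ht htm
  calc _ = ∫ α in Set.Ioo 0 c, K * α ^ ((u + 1 : ℕ) + β - 1) := by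
        rw [integral_const_mul, integral_Ioo_rpow (by linarith) (by positivity), sub_add_cancel,
          hK]
        ring
    _ ≤ ∫ α in Set.Ioo 0 c, α ^ (u + 1) / ascFactorial α (m + 1) * π α :=
        setIntegral_mono_on
          (((intervalIntegral.integrableOn_Ioo_rpow_iff (by positivity)).mpr
            (by linarith)).const_mul K)
          (hint.mono_set Set.Ioo_subset_Ioi_self) measurableSet_Ioo hpoint
    _ ≤ ∫ α in Set.Ioi 0, α ^ (u + 1) / ascFactorial α (m + 1) * π α := by
        refine setIntegral_mono_set hint ?_ Set.Ioo_subset_Ioi_self.eventuallyLE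
        filter_upwards [ae_restrict_mem measurableSet_Ioi] with α hα
        exact hπ.pow_div_ascFactorial_mul_nonneg _ _ hα

theorem lintegral_Ici_pow_div_ascFactorial_le (hπ : ∀ α, 0 ≤ π α) (hε : 0 < ε) (m k : ℕ) :
    ∫⁻ α in Set.Ici ε, ENNReal.ofReal (α ^ (k + 1) / ascFactorial α (m + 1) * π α) ≤
      ENNReal.ofReal (exp (-(ε / (1 + ε) * log (m + 1))) / m !) *
        ∫⁻ α in Set.Ioi 0, ENNReal.ofReal (α ^ k * π α) := by
  set A := exp (-(ε / (1 + ε) * log (m + 1))) / (m ! : ℝ)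
  calc ∫⁻ α in Set.Ici ε, ENNReal.ofReal (α ^ (k + 1) / ascFactorial α (m + 1) * π α)
      ≤ ∫⁻ α in Set.Ici ε, ENNReal.ofReal A * ENNReal.ofReal (α ^ k * π α) := by
        refine setLIntegral_mono' measurableSet_Ici fun α (hα : ε ≤ α) => ?_
        have hα0 := hε.trans_le hα
        rw [← ENNReal.ofReal_mul (by positivity)]
        refine ENNReal.ofReal_le_ofReal ?_
        calc α ^ (k + 1) / ascFactorial α (m + 1) * π α
            ≤ α ^ k * exp (-(min α ε / (1 + ε) * log (m + 1))) / m ! * π α :=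
              mul_le_mul_of_nonneg_right (pow_succ_div_ascFactorial_le m k hα0 hε.le) (hπ α)
          _ = A * (α ^ k * π α) := by rw [min_eq_right hα]; ring
    _ = ENNReal.ofReal A * ∫⁻ α in Set.Ici ε, ENNReal.ofReal (α ^ k * π α) :=
        lintegral_const_mul' _ _ ENNReal.ofReal_ne_top
    _ ≤ _ := by
        gcongr

theorem lintegral_Ioo_pow_div_ascFactorial_le (hA2 : PolyAtZero π ε δ β) {m : ℕ} (hm : 1 ≤ m)
    (t r : ℕ) :
    ∫⁻ α in Set.Ioo 0 ε, ENNReal.ofReal (α ^ (t + r + 1) / ascFactorial α (m + 1) * π α) ≤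
      ENNReal.ofReal (δ * ε ^ r *
        ((1 / (log (m + 1) / (1 + ε))) ^ ((t : ℝ) + β + 1) * Gamma ((t : ℝ) + β + 1)) / m !) := by
  obtain ⟨⟨hε0, -⟩, hδ, hβ, hπε⟩ := hA2
  have hκ : 0 < log ((m : ℝ) + 1) / (1 + ε) :=
    div_pos (Real.log_pos (by norm_cast; omega)) (by linarith)
  set κ := log ((m : ℝ) + 1) / (1 + ε) with hκdef
  set C := δ * ε ^ r / (m ! : ℝ) with hCdef
  have hC : 0 ≤ C := by positivity
  calc ∫⁻ α in Set.Ioo 0 ε, ENNReal.ofReal (α ^ (t + r + 1) / ascFactorial α (m + 1) * π α)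
      ≤ ∫⁻ α in Set.Ioo 0 ε,
          ENNReal.ofReal C * ENNReal.ofReal (α ^ ((t : ℝ) + β + 1 - 1) * exp (-(κ * α))) := by
        refine setLIntegral_mono' measurableSet_Ioo fun α ⟨hα0, hαε⟩ => ?_
        rw [← ENNReal.ofReal_mul hC]
        refine ENNReal.ofReal_le_ofReal ?_
        have hfrac := pow_succ_div_ascFactorial_le m (t + r) hα0 hε0.le
        rw [min_eq_left hαε.le] at hfrac
        have hpow : α ^ ((t : ℝ) + β + 1 - 1) = α ^ t * α ^ β := by
          rw [add_sub_cancel_right, Real.rpow_add hα0, Real.rpow_natCast]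
        calc α ^ (t + r + 1) / ascFactorial α (m + 1) * π α
            ≤ α ^ (t + r) * exp (-(α / (1 + ε) * log (m + 1))) / m ! * (δ * α ^ β) := by
              have hπα := hπε α ⟨hα0, hαε⟩
              exact mul_le_mul hfrac hπα.2 ((by positivity : 0 ≤ δ⁻¹ * α ^ β).trans hπα.1)
                (by positivity)
          _ = δ * α ^ r / m ! * ((α ^ t * α ^ β) * exp (-(κ * α))) := by
              rw [pow_add, hκdef]; ring_nf
          _ ≤ C * (α ^ ((t : ℝ) + β + 1 - 1) * exp (-(κ * α))) := by
              rw [hpow, hCdef]; gcongr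
    _ ≤ ∫⁻ α in Set.Ioi 0,
          ENNReal.ofReal C * ENNReal.ofReal (α ^ ((t : ℝ) + β + 1 - 1) * exp (-(κ * α))) :=
        lintegral_mono_set Set.Ioo_subset_Ioi_self
    _ = _ := by
        rw [lintegral_const_mul' _ _ ENNReal.ofReal_ne_top,
          lintegral_rpow_mul_exp_neg_mul (by positivity) hκ, ← ENNReal.ofReal_mul hC, hCdef]
        ring_nf

theorem ofReal_integral_pow_div_ascFactorial_le (hπ : IsPriorDensity π)
    (hA2 : PolyAtZero π ε δ β) {m t r : ℕ} (hm : 1 ≤ m) (htr : t + r ≤ m) :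
    ENNReal.ofReal (∫ α in Set.Ioi 0, α ^ (t + r + 1) / ascFactorial α (m + 1) * π α) ≤
      ENNReal.ofReal (exp (-(ε / (1 + ε) * log (m + 1))) / m !) *
          (∫⁻ α in Set.Ioi 0, ENNReal.ofReal (α ^ (t + r) * π α)) +
        ENNReal.ofReal (δ * ε ^ r *
          ((1 / (log (m + 1) / (1 + ε))) ^ ((t : ℝ) + β + 1) * Gamma ((t : ℝ) + β + 1)) / m !) := by
  calc _ = ∫⁻ α in Set.Ioo 0 ε ∪ Set.Ici ε,
        ENNReal.ofReal (α ^ (t + r + 1) / ascFactorial α (m + 1) * π α) := by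
        rw [Set.Ioo_union_Ici_eq_Ioi hA2.1.1, ofReal_integral_eq_lintegral_ofReal
          (hπ.integrableOn_pow_div_ascFactorial_mul (by omega) (by omega))]
        filter_upwards [ae_restrict_mem measurableSet_Ioi] with α hα
        exact hπ.pow_div_ascFactorial_mul_nonneg _ _ hα
    _ ≤ _ := (lintegral_union_le _ _ _).trans (add_le_add
        (lintegral_Ioo_pow_div_ascFactorial_le hA2 hm t r)
        (lintegral_Ici_pow_div_ascFactorial_le hπ.2.1 hA2.1.1 m (t + r)))
    _ = _ := add_comm _ _

theorem le_lintegral_pow_mul (hA2 : PolyAtZero π ε δ β) (k : ℕ) :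
    ENNReal.ofReal (δ⁻¹ * (ε ^ ((k : ℝ) + β + 1) / (k + β + 1))) ≤
      ∫⁻ α in Set.Ioi 0, ENNReal.ofReal (α ^ k * π α) := by
  obtain ⟨⟨hε0, -⟩, hδ, hβ, hπε⟩ := hA2
  have hp : -1 < (k : ℝ) + β := by linarith [k.cast_nonneg (α := ℝ)]
  have hint : IntegrableOn (fun α : ℝ => δ⁻¹ * α ^ ((k : ℝ) + β)) (Set.Ioo 0 ε) :=
    ((intervalIntegral.integrableOn_Ioo_rpow_iff hε0).mpr hp).const_mul _
  rw [← integral_Ioo_rpow hp hε0.le, ← integral_const_mul,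
    ofReal_integral_eq_lintegral_ofReal hint]
  · refine (setLIntegral_mono' measurableSet_Ioo fun α ⟨hα0, hαε⟩ => ?_).trans
      (lintegral_mono_set Set.Ioo_subset_Ioi_self)
    refine ENNReal.ofReal_le_ofReal ?_
    rw [Real.rpow_add hα0, Real.rpow_natCast, mul_left_comm]
    exact mul_le_mul_of_nonneg_left (hπε α ⟨hα0, hαε⟩).1 (by positivity)
  · filter_upwards [ae_restrict_mem measurableSet_Ioo] with α hα
    exact mul_nonneg (by positivity) (Real.rpow_nonneg hα.1.le _)

end Prior

/-- Corollary S.1 of the paper.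
Under (A1)–(A2) there exists `G > 0` such that for all `n ≥ 4` and `0 < s ≤ n − t`,
`C(n,t,t+s) ≤ G Γ(t+β+1) 2^s s ε^{−1} E(α^{t+s−1}) (log(n/(1+ε)))^{−1}`, where the
(possibly infinite) moment `E(α^{t+s−1}) = ∫_0^∞ α^{t+s−1} π(α) dα` is taken in `[0,∞]`
and the inequality is correspondingly stated in `[0,∞]`. -/
theorem prior_coefficient_ratio_log_bound
    (π : ℝ → ℝ) (ε δ β : ℝ) (t : ℕ)
    (hA1 : IsPriorDensity π) (hA2 : PolyAtZero π ε δ β) (ht : 1 ≤ t) :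
    ∃ G : ℝ, 0 < G ∧
      ∀ n s : ℕ, 4 ≤ n → 0 < s → s ≤ n - t →
        ENNReal.ofReal (Cratio π n t (t + s))
          ≤ ENNReal.ofReal (G * Real.Gamma ((t : ℝ) + β + 1) * 2 ^ s * s / ε /
                Real.log ((n : ℝ) / (1 + ε))) *
            ∫⁻ α in Set.Ioi (0:ℝ), ENNReal.ofReal (α ^ (t + s - 1) * π α) := by
  obtain ⟨⟨hε0, hε1⟩, hδ, hβ, -⟩ := id hA2
  have hp : (0 : ℝ) < t + β := by positivity
  set p : ℝ := t + β
  set K₁ := δ * exp 1 * p / ε ^ p * (2 * (p + 1) / (ε / (1 + ε))) ^ (p + 1)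
  set K₂ := δ ^ 3 * exp 1 * p * (p + 1) * Gamma (p + 1) * (1 + ε) ^ (p + 1) * 2 ^ p /
    (ε ^ p * ε ^ p * ε)
  refine ⟨ε * (K₁ + K₂) / Gamma (p + 1), by positivity, fun n s hn hs hsn => ?_⟩
  obtain ⟨m, rfl⟩ : ∃ m, n = m + 1 := ⟨n - 1, by omega⟩
  obtain ⟨r, rfl⟩ : ∃ r, s = r + 1 := ⟨s - 1, by omega⟩
  have hn' : (4 : ℝ) ≤ m + 1 := by exact_mod_cast hn
  have hL := one_le_log_of_four_le hn'
  obtain ⟨hL₀, hL₀L⟩ := log_div_one_add_mem_Ioc (x := m + 1) (by linarith) hε0 hε1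
  have hE := le_lintegral_pow_mul hA2 (t + r)
  rw [show ((t + r : ℕ) : ℝ) + β + 1 = p + r + 1 by push_cast; ring] at hE
  rw [Cratio, show t + (r + 1) - 1 = t + r by omega, ← add_assoc]
  push_cast
  refine ofReal_div_le_ofReal_mul (by positivity) (by positivity) (by positivity) (by positivity)
    (by positivity) (ofReal_integral_pow_div_ascFactorial_le hA1 hA2 (by omega) (by omega))
    (le_integral_pow_div_ascFactorial_mul hA1 hA2 ht (by omega)) hE ?_
  have hslack : (r + 1 : ℝ) * (K₁ + K₂) ≤ (r + 1) * (K₁ + K₂) * 2 ^ (r + 1) :=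
    le_mul_of_one_le_right (by positivity) (one_le_pow₀ one_le_two)
  calc _ ≤ (K₁ + K₂ * (r + 1)) / log (((m : ℝ) + 1) / (1 + ε)) := by
        rw [add_div]
        exact add_le_add (tail_ratio_le hε0 hδ hp hL hL₀ hL₀L)
          (near_zero_ratio_le hε0 hδ hp hL hL₀ hL₀L r)
    _ ≤ _ := by
        rw [div_le_div_iff_of_pos_right hL₀]
        field_simp
        nlinarith [r.cast_nonneg (α := ℝ), (by positivity : 0 ≤ K₁)]
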